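/- arXiv:1405.6759 — 4 statements merged into one kernel-verified Lean document; each statement's English description precedes it below -/
import Mathlib

section
/- Let h and g be complex functions analytic on the unit disk 𝔻 = {z ∈ ℂ : |z| < 1} with g(0) = 0, and define f(z) = h(z) + conj(g(z)). Assume f is locally univalent on 𝔻, i.e., every point of 𝔻 has a neighborhood contained in 𝔻 on which f is injective. Then f is injective on 𝔻 and f(𝔻) is convex in the horizontal direction if and only if h − g is injective on 𝔻 and (h − g)(𝔻) is convex in the horizontal direction. -/
/-- A set `S ⊆ ℂ` is convex in the horizontal direction (CHD) if its intersection
with each horizontal line is order-connected (an interval, possibly empty). -/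
def ConvexHorizontalDirection (S : Set ℂ) : Prop :=
  ∀ c : ℝ, Set.OrdConnected {x : ℝ | (x : ℂ) + c * Complex.I ∈ S}

/-!
`f = h + conj g` and `F = h - g` have the same imaginary part, so they map the same level sets
`{Im = c}` of the disk into the same horizontal lines. If `P` (one of `f`, `F`) is injective with
CHD image and `Q` is the other one, then on the line `Im = c` the function
`x ↦ Re Q (P⁻¹ (x + c i))` is continuous and locally injective on an interval, hence injective
with an interval as image; this transfers both properties to `Q`.

Continuity of `P⁻¹` along horizontal lines comes from the open mapping theorem when `P = F`, and
from the intermediate value theorem along the level curves of `Im F` when `P = f`; the latter, and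
local injectivity of `Q = F`, need `F' ≠ 0`. At a critical point `z₀`, either `F` is locally
constant or `F = F z₀ + φⁿ` with `n ≥ 2` and `φ` a local coordinate, so `Im f = Im F` is constant
on three arcs issuing from `z₀`; but no continuous real function, here `Re f`, is injective on
such a triod.
-/

open Set Filter Topology Metric Complex Function

theorem ContinuousOn.image_Icc_mem_nhds_of_injOn {q : ℝ → ℝ} {a b x : ℝ} (hax : a < x)
    (hxb : x < b) (hqc : ContinuousOn q (Icc a b)) (hqi : InjOn q (Icc a b)) :
    q '' Icc a b ∈ 𝓝 (q x) := by
  have hab : a ≤ b := (hax.trans hxb).le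
  have ha : a ∈ Icc a b := left_mem_Icc.2 hab
  have hb : b ∈ Icc a b := right_mem_Icc.2 hab
  have hx : x ∈ Icc a b := ⟨hax.le, hxb.le⟩
  rcases hqc.strictMonoOn_of_injOn_Icc' hab hqi with hq | hq
  · exact mem_of_superset (Icc_mem_nhds (hq ha hx hax) (hq hx hb hxb))
      (intermediate_value_Icc hab hqc)
  · exact mem_of_superset (Icc_mem_nhds (hq hx hb hxb) (hq ha hx hax))
      (intermediate_value_Icc' hab hqc)

theorem ContinuousOn.not_isExtrOn_of_injOn_Icc {q : ℝ → ℝ} {a b x : ℝ} (hax : a < x)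
    (hxb : x < b) (hqc : ContinuousOn q (Icc a b)) (hqi : InjOn q (Icc a b)) :
    ¬ IsExtrOn q (Icc a b) x := by
  have hnhds := hqc.image_Icc_mem_nhds_of_injOn hax hxb hqi
  rintro (hmin | hmax)
  · obtain ⟨_, hlt, y, hy, rfl⟩ := Eventually.exists_lt hnhds
    exact (hmin hy).not_gt hlt
  · obtain ⟨_, hgt, y, hy, rfl⟩ := Eventually.exists_gt hnhds
    exact (hmax hy).not_gt hgt

theorem Set.OrdConnected.injOn_of_locallyInjOn {A : Set ℝ} {t : ℝ → ℝ} (hA : A.OrdConnected)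
    (htc : ContinuousOn t A) (hloc : ∀ x ∈ A, ∃ V ∈ 𝓝[A] x, InjOn t V) : InjOn t A := by
  intro a ha b hb hab
  by_contra hne
  wlog hlt : a < b generalizing a b
  · exact this hb ha hab.symm (Ne.symm hne) ((Ne.symm hne).lt_of_le (not_lt.1 hlt))
  have hsub : Icc a b ⊆ A := hA.out ha hb
  obtain ⟨x, hx, hext⟩ := exists_Ioo_extr_on_Icc hlt (htc.mono hsub) hab
  obtain ⟨V, hV, htV⟩ := hloc x (hsub (Ioo_subset_Icc_self hx))
  obtain ⟨U, hU, hUV⟩ := mem_nhdsWithin_iff_exists_mem_nhds_inter.1 hV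
  obtain ⟨δ, hδ, hδU⟩ := (nhds_basis_Icc_pos x).mem_iff.1 (inter_mem hU (Ioo_mem_nhds hx.1 hx.2))
  have hδab : Icc (x - δ) (x + δ) ⊆ Icc a b := fun y hy => Ioo_subset_Icc_self (hδU hy).2
  refine (htc.mono (hδab.trans hsub)).not_isExtrOn_of_injOn_Icc (by linarith) (by linarith)
    (htV.mono fun y hy => hUV ⟨(hδU hy).1, hsub (hδab hy)⟩) (hext.on_subset hδab)

theorem exists_ne_mem_uIcc {ι : Type*} [Fintype ι] (hι : 2 < Fintype.card ι) (t : ℝ)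
    (y : ι → ℝ) : ∃ i j, i ≠ j ∧ y j ∈ uIcc t (y i) := by
  obtain ⟨i, j, hij, hside⟩ :=
    Fintype.exists_ne_map_eq_of_card_lt (fun j => t < y j) (by simpa using hι)
  simp only [eq_iff_iff] at hside
  rcases le_total (y i) (y j) with h | h
  · by_cases hti : t < y i
    · exact ⟨j, i, hij.symm, mem_uIcc.2 (Or.inl ⟨hti.le, h⟩)⟩
    · exact ⟨i, j, hij, mem_uIcc.2 (Or.inr ⟨h, not_lt.1 (hside.not.1 hti)⟩)⟩
  · by_cases htj : t < y j
    · exact ⟨i, j, hij, mem_uIcc.2 (Or.inl ⟨htj.le, h⟩)⟩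
    · exact ⟨j, i, hij.symm, mem_uIcc.2 (Or.inr ⟨h, not_lt.1 (hside.not.2 htj)⟩)⟩

theorem exists_eq_of_three_paths {ε t : ℝ} (hε : 0 ≤ ε) (q : Fin 3 → ℝ → ℝ)
    (hqc : ∀ j, ContinuousOn (q j) (Icc 0 ε)) (hq0 : ∀ j, q j 0 = t) (hqε : ∀ j, q j ε ≠ t) :
    ∃ i j, i ≠ j ∧ ∃ s ∈ Ioc 0 ε, q i s = q j ε := by
  obtain ⟨i, j, hij, hmem⟩ := exists_ne_mem_uIcc (by simp) t fun j => q j ε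
  rw [← hq0 i] at hmem
  obtain ⟨s, hs, hqs⟩ := intermediate_value_uIcc (by rw [uIcc_of_le hε]; exact hqc i) hmem
  rw [uIcc_of_le hε] at hs
  refine ⟨i, j, hij, s, ⟨hs.1.lt_of_ne ?_, hs.2⟩, hqs⟩
  rintro rfl
  exact hqε j (hqs ▸ hq0 i)

theorem HasStrictDerivAt.exists_continuousOn_rightInverse {𝕜 : Type*} [NontriviallyNormedField 𝕜]
    [CompleteSpace 𝕜] {F : 𝕜 → 𝕜} {F' z₀ : 𝕜} (hF : HasStrictDerivAt F F' z₀) (hF' : F' ≠ 0)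
    {W : Set 𝕜} (hW : W ∈ 𝓝 z₀) :
    ∃ r > 0, ∃ G : 𝕜 → 𝕜, ContinuousOn G (closedBall (F z₀) r) ∧ G (F z₀) = z₀ ∧
      ∀ w ∈ closedBall (F z₀) r, G w ∈ W ∧ F (G w) = w := by
  set e := (hF.hasStrictFDerivAt_equiv hF').toOpenPartialHomeomorph F
  have hz₀ : z₀ ∈ e.source := HasStrictFDerivAt.mem_toOpenPartialHomeomorph_source _
  have hT : e.target ∩ e.symm ⁻¹' W ∈ 𝓝 (F z₀) :=
    inter_mem (e.open_target.mem_nhds (e.map_source hz₀)) (e.tendsto_symm hz₀ hW)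
  obtain ⟨r, hr, hball⟩ := nhds_basis_closedBall.mem_iff.1 hT
  exact ⟨r, hr, e.symm, e.continuousOn_symm.mono fun w hw => (hball hw).1, e.left_inv hz₀,
    fun w hw => ⟨(hball hw).2, e.right_inv (hball hw).1⟩⟩

theorem HasStrictDerivAt.exists_mem_nhds_injOn {𝕜 : Type*} [NontriviallyNormedField 𝕜]
    [CompleteSpace 𝕜] {F : 𝕜 → 𝕜} {F' z : 𝕜} (hF : HasStrictDerivAt F F' z) (hF' : F' ≠ 0) :
    ∃ U ∈ 𝓝 z, InjOn F U :=
  ⟨_, hF.eventually_left_inverse hF', fun _ hx _ hy hxy =>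
    hx.symm.trans ((congrArg _ hxy).trans hy)⟩

theorem exists_three_unit_vectors_pow_im_eq_zero {n : ℕ} (hn : 2 ≤ n) :
    ∃ ζ : Fin 3 → ℂ, Injective ζ ∧ ∀ j, ‖ζ j‖ = 1 ∧ (ζ j ^ n).im = 0 := by
  set ω := exp ((Real.pi / n : ℝ) * I)
  have hω : 0 < ω.im := by
    rw [exp_ofReal_mul_I_im]
    exact Real.sin_pos_of_pos_of_lt_pi (by positivity)
      (div_lt_self Real.pi_pos (by exact_mod_cast hn))
  have hωn : ω ^ n = -1 := by
    have hn0 : (n : ℂ) ≠ 0 := by norm_cast; omega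
    rw [← exp_nat_mul, ← exp_pi_mul_I]
    congr 1
    push_cast
    field_simp
  refine ⟨![1, -1, ω], fun i j hij => ?_, fun j => ?_⟩
  · fin_cases i <;> fin_cases j <;> simp at hij ⊢ <;>
      first
        | (norm_num at hij; done)
        | (rw [hij] at hω; simp at hω)
        | (rw [← hij] at hω; simp at hω)
  · fin_cases j
    · simp
    · rcases neg_one_pow_eq_or ℂ n with h | h <;> simp [h]
    · exact ⟨norm_exp_ofReal_mul_I _, by simp [hωn]⟩

theorem not_injOn_of_im_const_on_star {f φ : ℂ → ℂ} {φ' z₀ : ℂ} {U : Set ℂ} {n : ℕ}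
    (hU : U ∈ 𝓝 z₀) (hfc : ContinuousOn f U) (hφ : HasStrictDerivAt φ φ' z₀) (hφ' : φ' ≠ 0)
    (hφ0 : φ z₀ = 0) (hn : 2 ≤ n)
    (hstar : ∀ᶠ z in 𝓝 z₀, (φ z ^ n).im = 0 → (f z).im = (f z₀).im) : ¬ InjOn f U := by
  intro hfi
  obtain ⟨ζ, hζinj, hζ⟩ := exists_three_unit_vectors_pow_im_eq_zero hn
  obtain ⟨r, hr, G, hGc, hG0, hG⟩ := hφ.exists_continuousOn_rightInverse hφ' (inter_mem hU hstar)
  rw [hφ0] at hG0 hG hGc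
  have hray : ∀ j, ∀ s ∈ Icc 0 r, (s : ℂ) * ζ j ∈ closedBall (0 : ℂ) r := by
    intro j s hs
    simpa [norm_mul, (hζ j).1, abs_of_nonneg hs.1] using hs.2
  set γ : Fin 3 → ℝ → ℂ := fun j s => G (s * ζ j)
  have hγU : ∀ j, ∀ s ∈ Icc 0 r, γ j s ∈ U := fun j s hs => (hG _ (hray j s hs)).1.1
  have hγim : ∀ j, ∀ s ∈ Icc 0 r, (f (γ j s)).im = (f z₀).im := by
    intro j s hs
    refine (hG _ (hray j s hs)).1.2 ?_
    rw [(hG _ (hray j s hs)).2, mul_pow, ← ofReal_pow, im_ofReal_mul, (hζ j).2, mul_zero]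
  have hγinj : ∀ i j, ∀ s ∈ Icc 0 r, ∀ s' ∈ Icc 0 r,
      (f (γ i s)).re = (f (γ j s')).re → (s : ℂ) * ζ i = s' * ζ j := by
    intro i j s hs s' hs' hre
    have hγ : γ i s = γ j s' :=
      hfi (hγU i s hs) (hγU j s' hs') (Complex.ext hre (by rw [hγim i s hs, hγim j s' hs']))
    rw [← (hG _ (hray i s hs)).2, ← (hG _ (hray j s' hs')).2]
    exact congrArg φ hγ
  have hr0 : (0 : ℝ) ∈ Icc 0 r := left_mem_Icc.2 hr.le
  have hrr : r ∈ Icc 0 r := right_mem_Icc.2 hr.le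
  obtain ⟨i, j, hij, s, hs, hq⟩ := exists_eq_of_three_paths (t := (f z₀).re) hr.le
    (fun j s => (f (γ j s)).re)
    (fun j => continuous_re.comp_continuousOn
      (hfc.comp (hGc.comp (by fun_prop) (hray j)) (hγU j)))
    (fun j => by simp [γ, hG0])
    (fun j hj => by
      have hζ0 : ζ j = 0 := by
        simpa [hr.ne'] using hγinj j j r hrr 0 hr0 (by simpa [γ, hG0] using hj)
      simpa [hζ0] using (hζ j).1)
  have hsζ := hγinj i j s (Ioc_subset_Icc_self hs) r hrr hq
  have hsr : s = r := by
    simpa [norm_mul, (hζ _).1, abs_of_pos hs.1, abs_of_pos hr] using congrArg norm hsζ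
  rw [hsr] at hsζ
  exact hij (hζinj (mul_left_cancel₀ (by simp [hr.ne']) hsζ))

theorem AnalyticAt.exists_eventuallyEq_add_pow {F : ℂ → ℂ} {z₀ : ℂ} (hF : AnalyticAt ℂ F z₀)
    (hnc : ¬ ∀ᶠ z in 𝓝 z₀, F z = F z₀) :
    ∃ n ≠ 0, ∃ φ : ℂ → ℂ, ∃ φ' ≠ 0, HasStrictDerivAt φ φ' z₀ ∧ φ z₀ = 0 ∧
      ∀ᶠ z in 𝓝 z₀, F z = F z₀ + φ z ^ n := by
  have hF₀ : AnalyticAt ℂ (fun z => F z - F z₀) z₀ := hF.sub analyticAt_const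
  obtain ⟨n, g, hg, hg0, hFg⟩ :=
    hF₀.exists_eventuallyEq_pow_smul_nonzero_iff.2 (by simpa only [sub_eq_zero] using hnc)
  have hn : n ≠ 0 := by
    rintro rfl
    exact hg0 (by simpa using hFg.self_of_nhds.symm)
  obtain ⟨c, hc⟩ := IsAlgClosed.exists_pow_nat_eq (g z₀) (Nat.pos_of_ne_zero hn)
  -- an `n`-th root of `g`: the principal branch of `w ^ (1 / n)` is analytic near `w = 1`
  set ψ : ℂ → ℂ := fun z => c * (g z / g z₀) ^ (n⁻¹ : ℂ)
  have hψn : ∀ z, ψ z ^ n = g z := fun z => by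
    rw [mul_pow, cpow_nat_inv_pow _ hn, hc, mul_div_cancel₀ _ hg0]
  have hψ : AnalyticAt ℂ ψ z₀ := analyticAt_const.mul
    ((hg.div analyticAt_const hg0).cpow analyticAt_const (by simp [hg0]))
  have hψ0 : ψ z₀ ≠ 0 := by
    rintro h
    exact hg0 (by rw [← hψn, h, zero_pow hn])
  refine ⟨n, hn, fun z => (z - z₀) * ψ z, ψ z₀, hψ0, ?_, by simp, ?_⟩
  · have hid : HasStrictDerivAt (fun z => z - z₀) 1 z₀ := (hasStrictDerivAt_id z₀).sub_const z₀
    have h := hid.mul hψ.hasStrictDerivAt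
    rw [sub_self, zero_mul, one_mul, add_zero] at h
    exact h
  · filter_upwards [hFg] with z hz
    rw [mul_pow, hψn, ← smul_eq_mul, ← hz]
    ring

theorem deriv_ne_zero_of_injOn_of_im_eq {f F : ℂ → ℂ} {z₀ : ℂ} {U : Set ℂ}
    (hF : AnalyticAt ℂ F z₀) (hU : U ∈ 𝓝 z₀) (hfc : ContinuousOn f U) (hfi : InjOn f U)
    (hIm : ∀ z ∈ U, (f z).im = (F z).im) : deriv F z₀ ≠ 0 := by
  intro hd
  have hIm₀ := hIm z₀ (mem_of_mem_nhds hU)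
  by_cases hconst : ∀ᶠ z in 𝓝 z₀, F z = F z₀
  · refine not_injOn_of_im_const_on_star hU hfc ((hasStrictDerivAt_id z₀).sub_const z₀)
      one_ne_zero (sub_self z₀) le_rfl ?_ hfi
    filter_upwards [hconst, hU] with z hz hzU _
    rw [hIm z hzU, hz, hIm₀]
  · obtain ⟨n, hn, φ, φ', hφ', hφ, hφ0, hFφ⟩ := hF.exists_eventuallyEq_add_pow hconst
    have hn2 : 2 ≤ n := by
      refine (Nat.two_le_iff n).2 ⟨hn, fun hn1 => hφ' ?_⟩
      subst hn1
      have hFd : HasDerivAt F (0 + φ') z₀ :=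
        ((hasDerivAt_const z₀ (F z₀)).add hφ.hasDerivAt).congr_of_eventuallyEq
          (hFφ.mono fun z hz => by simpa using hz)
      rw [← hd, hFd.deriv, zero_add]
    refine not_injOn_of_im_const_on_star hU hfc hφ hφ' hφ0 hn2 ?_ hfi
    filter_upwards [hFφ, hU] with z hz hzU hre
    rw [hIm z hzU, hz, add_im, hre, add_zero, hIm₀]

def horizontalSlice (S : Set ℂ) (c : ℝ) : Set ℝ := {x : ℝ | (x : ℂ) + c * I ∈ S}

def HorizontallyOpenOn (P : ℂ → ℂ) (D : Set ℂ) : Prop :=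
  ∀ z ∈ D, ∀ W ∈ 𝓝 z, ∀ᶠ x : ℝ in 𝓝 (P z).re, (x : ℂ) + (P z).im * I ∈ P '' (W ∩ D)

theorem horizontallyOpenOn_of_nhds_le_map {P : ℂ → ℂ} {D : Set ℂ} (hD : IsOpen D)
    (hP : ∀ z ∈ D, 𝓝 (P z) ≤ map P (𝓝 z)) : HorizontallyOpenOn P D := by
  intro z hz W hW
  have hline : Tendsto (fun x : ℝ => (x : ℂ) + (P z).im * I) (𝓝 (P z).re) (𝓝 (P z)) := by
    simpa only [re_add_im] using ((by fun_prop : Continuous fun x : ℝ =>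
      (x : ℂ) + (P z).im * I).tendsto (P z).re)
  exact hline (hP z hz (image_mem_map (inter_mem hW (hD.mem_nhds hz))))

theorem AnalyticOnNhd.nhds_le_map_of_injOn {F : ℂ → ℂ} {D : Set ℂ} (hD : IsOpen D)
    (hF : AnalyticOnNhd ℂ F D) (hFi : InjOn F D) {z : ℂ} (hz : z ∈ D) :
    𝓝 (F z) ≤ map F (𝓝 z) := by
  refine (hF z hz).eventually_constant_or_nhds_le_map_nhds.resolve_left fun hconst => ?_
  have hz' : ∀ᶠ w in 𝓝[≠] z, w = z := nhdsWithin_le_nhds <|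
    (hconst.and (hD.mem_nhds hz)).mono fun w hw => hFi hw.2 hz hw.1
  obtain ⟨w, hw, hne⟩ := (hz'.and self_mem_nhdsWithin).exists
  exact hne hw

theorem horizontallyOpenOn_of_im_eq {f F : ℂ → ℂ} {D : Set ℂ} (hD : IsOpen D)
    (hF : AnalyticOnNhd ℂ F D) (hd : ∀ z ∈ D, deriv F z ≠ 0) (hfc : ContinuousOn f D)
    (hfi : InjOn f D) (hIm : ∀ z ∈ D, (f z).im = (F z).im) : HorizontallyOpenOn f D := by
  intro z₀ hz₀ W hW
  obtain ⟨r, hr, G, hGc, hG0, hG⟩ := (hF z₀ hz₀).hasStrictDerivAt.exists_continuousOn_rightInverse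
    (hd z₀ hz₀) (inter_mem hW (hD.mem_nhds hz₀))
  set c := (F z₀).im
  set J := Icc ((F z₀).re - r) ((F z₀).re + r)
  set α : ℝ → ℂ := fun x => G (x + c * I)
  have hline : ∀ x ∈ J, (x : ℂ) + c * I ∈ closedBall (F z₀) r := by
    intro x hx
    have hx' : x ∈ closedBall (F z₀).re r := by rwa [Real.closedBall_eq_Icc]
    rw [mem_closedBall, dist_of_im_eq (by simp [c])]
    simpa using hx'
  have hαW : ∀ x ∈ J, α x ∈ W ∩ D := fun x hx => (hG _ (hline x hx)).1
  have hFα : ∀ x ∈ J, F (α x) = x + c * I := fun x hx => (hG _ (hline x hx)).2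
  have hfα : ∀ x ∈ J, f (α x) = (f (α x)).re + c * I := by
    intro x hx
    apply Complex.ext <;> simp [hIm _ (hαW x hx).2, hFα x hx]
  have hqi : InjOn (fun x => (f (α x)).re) J := by
    intro x hx y hy (hxy : (f (α x)).re = (f (α y)).re)
    have hαxy := congrArg F (hfi (hαW x hx).2 (hαW y hy).2 (by rw [hfα x hx, hfα y hy, hxy]))
    rw [hFα x hx, hFα y hy] at hαxy
    simpa using congrArg re hαxy
  have hqc : ContinuousOn (fun x => (f (α x)).re) J := continuous_re.comp_continuousOn
    (hfc.comp (hGc.comp (by fun_prop) hline) fun x hx => (hαW x hx).2)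
  have hα0 : α (F z₀).re = z₀ := by simp [α, c, re_add_im, hG0]
  have hnhds := hqc.image_Icc_mem_nhds_of_injOn (x := (F z₀).re) (by linarith) (by linarith) hqi
  simp only [hα0] at hnhds
  rw [hIm z₀ hz₀]
  filter_upwards [hnhds] with x ⟨y, hy, hyx⟩
  exact ⟨α y, hαW y hy, by rw [hfα y hy, ← hyx]⟩

theorem HorizontallyOpenOn.continuousAt_invFunOn {P : ℂ → ℂ} {D : Set ℂ}
    (hP : HorizontallyOpenOn P D) (hPi : InjOn P D) {c x₀ : ℝ}
    (hx₀ : x₀ ∈ horizontalSlice (P '' D) c) :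
    ContinuousAt (fun x : ℝ => invFunOn P D (x + c * I)) x₀ := by
  have hPz₀ : P (invFunOn P D (x₀ + c * I)) = x₀ + c * I := invFunOn_eq hx₀
  intro W hW
  have hre : ((x₀ : ℂ) + c * I).re = x₀ := by simp
  have him : ((x₀ : ℂ) + c * I).im = c := by simp
  have hline := hP _ (invFunOn_mem hx₀) W hW
  rw [hPz₀, hre, him] at hline
  rw [mem_map]
  filter_upwards [hline] with x ⟨w, ⟨hwW, hwD⟩, hPw⟩
  rw [mem_preimage, ← hPw, hPi.leftInvOn_invFunOn hwD]
  exact hwW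

noncomputable def sliceMap (P Q : ℂ → ℂ) (D : Set ℂ) (c x : ℝ) : ℝ :=
  (Q (invFunOn P D (x + c * I))).re

section sliceMap

variable {P Q : ℂ → ℂ} {D : Set ℂ} {c : ℝ}

theorem mem_horizontalSlice_image_re {z : ℂ} (hz : z ∈ D) :
    (P z).re ∈ horizontalSlice (P '' D) (P z).im :=
  ⟨z, hz, (re_add_im _).symm⟩

theorem sliceMap_re (hPi : InjOn P D) {z : ℂ} (hz : z ∈ D) :
    sliceMap P Q D (P z).im (P z).re = (Q z).re := by
  rw [sliceMap, re_add_im, hPi.leftInvOn_invFunOn hz]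

theorem apply_invFunOn_eq_sliceMap (hIm : ∀ z ∈ D, (Q z).im = (P z).im) {x : ℝ}
    (hx : x ∈ horizontalSlice (P '' D) c) :
    Q (invFunOn P D (x + c * I)) = sliceMap P Q D c x + c * I := by
  apply Complex.ext <;> simp [sliceMap, hIm _ (invFunOn_mem hx), invFunOn_eq hx]

theorem image_sliceMap (hPi : InjOn P D) (hIm : ∀ z ∈ D, (Q z).im = (P z).im) :
    sliceMap P Q D c '' horizontalSlice (P '' D) c = horizontalSlice (Q '' D) c := by
  ext x
  constructor
  · rintro ⟨y, hy, rfl⟩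
    exact ⟨_, invFunOn_mem hy, apply_invFunOn_eq_sliceMap hIm hy⟩
  · rintro ⟨z, hz, hQz⟩
    obtain rfl : (P z).im = c := by rw [← hIm z hz, hQz]; simp
    exact ⟨_, mem_horizontalSlice_image_re hz, by rw [sliceMap_re hPi hz, hQz]; simp⟩

theorem continuousOn_sliceMap (hPi : InjOn P D) (hPo : HorizontallyOpenOn P D)
    (hQc : ContinuousOn Q D) : ContinuousOn (sliceMap P Q D c) (horizontalSlice (P '' D) c) :=
  continuous_re.comp_continuousOn <| hQc.comp
    (fun _ hx => (hPo.continuousAt_invFunOn hPi hx).continuousWithinAt) fun _ hx => invFunOn_mem hx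

theorem injOn_sliceMap (hPi : InjOn P D) (hPo : HorizontallyOpenOn P D)
    (hP : (horizontalSlice (P '' D) c).OrdConnected) (hQc : ContinuousOn Q D)
    (hQloc : ∀ z ∈ D, ∃ U ∈ 𝓝 z, InjOn Q U) (hIm : ∀ z ∈ D, (Q z).im = (P z).im) :
    InjOn (sliceMap P Q D c) (horizontalSlice (P '' D) c) := by
  refine hP.injOn_of_locallyInjOn (continuousOn_sliceMap hPi hPo hQc) fun x hx => ?_
  set Z : ℝ → ℂ := fun x => invFunOn P D (x + c * I)
  obtain ⟨U, hU, hQU⟩ := hQloc _ (invFunOn_mem hx)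
  have hZU : Z ⁻¹' U ∈ 𝓝[horizontalSlice (P '' D) c] x :=
    (hPo.continuousAt_invFunOn hPi hx).continuousWithinAt hU
  refine ⟨_, inter_mem self_mem_nhdsWithin hZU, fun y hy y' hy' hyy' => ?_⟩
  have hZ := congrArg P <| hQU hy.2 hy'.2 <| by
    rw [apply_invFunOn_eq_sliceMap hIm hy.1, apply_invFunOn_eq_sliceMap hIm hy'.1, hyy']
  rw [invFunOn_eq hy.1, invFunOn_eq hy'.1] at hZ
  simpa using congrArg re hZ

end sliceMap

theorem injOn_and_convexHorizontalDirection_of_im_eq {P Q : ℂ → ℂ} {D : Set ℂ}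
    (hPi : InjOn P D) (hPo : HorizontallyOpenOn P D) (hP : ConvexHorizontalDirection (P '' D))
    (hQc : ContinuousOn Q D) (hQloc : ∀ z ∈ D, ∃ U ∈ 𝓝 z, InjOn Q U)
    (hIm : ∀ z ∈ D, (Q z).im = (P z).im) :
    InjOn Q D ∧ ConvexHorizontalDirection (Q '' D) := by
  refine ⟨fun z hz z' hz' hQ => hPi hz hz' ?_, fun c => ?_⟩
  · have him : (P z').im = (P z).im := by rw [← hIm z' hz', ← hQ, hIm z hz]
    have hre : (P z).re = (P z').re := by
      refine injOn_sliceMap hPi hPo (hP _) hQc hQloc hIm (mem_horizontalSlice_image_re hz)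
        (him ▸ mem_horizontalSlice_image_re hz') ?_
      rw [sliceMap_re hPi hz, ← him, sliceMap_re hPi hz', hQ]
    exact Complex.ext hre him.symm
  · change (horizontalSlice (Q '' D) c).OrdConnected
    rw [← image_sliceMap hPi hIm]
    exact ((hP c).isPreconnected.image _ (continuousOn_sliceMap hPi hPo hQc)).ordConnected

theorem clunie_sheil_small_general
    (h g : ℂ → ℂ)
    (hh : DifferentiableOn ℂ h (Metric.ball (0 : ℂ) 1))
    (hg : DifferentiableOn ℂ g (Metric.ball (0 : ℂ) 1))
    (f : ℂ → ℂ)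
    (hf : ∀ z, f z = h z + (starRingEnd ℂ) (g z))
    (hloc : ∀ z ∈ Metric.ball (0 : ℂ) 1, ∃ U ∈ nhds z,
      U ⊆ Metric.ball (0 : ℂ) 1 ∧ Set.InjOn f U) :
    (Set.InjOn f (Metric.ball (0 : ℂ) 1) ∧
        ConvexHorizontalDirection (f '' Metric.ball (0 : ℂ) 1)) ↔
      (Set.InjOn (fun z => h z - g z) (Metric.ball (0 : ℂ) 1) ∧
        ConvexHorizontalDirection ((fun z => h z - g z) '' Metric.ball (0 : ℂ) 1)) := by
  set D := ball (0 : ℂ) 1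
  set F := fun z => h z - g z
  have hD : IsOpen D := isOpen_ball
  have hF : AnalyticOnNhd ℂ F D := (hh.sub hg).analyticOnNhd hD
  have hfc : ContinuousOn f D :=
    (hh.continuousOn.add (continuous_conj.comp_continuousOn hg.continuousOn)).congr
      fun z _ => hf z
  have hIm : ∀ z ∈ D, (f z).im = (F z).im := fun z _ => by
    simp only [hf z, F, add_im, conj_im, sub_im]
    ring
  constructor
  · rintro ⟨hfi, hfD⟩
    have hd : ∀ z ∈ D, deriv F z ≠ 0 := fun z hz =>
      deriv_ne_zero_of_injOn_of_im_eq (hF z hz) (hD.mem_nhds hz) hfc hfi hIm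
    exact injOn_and_convexHorizontalDirection_of_im_eq hfi
      (horizontallyOpenOn_of_im_eq hD hF hd hfc hfi hIm) hfD hF.continuousOn
      (fun z hz => (hF z hz).hasStrictDerivAt.exists_mem_nhds_injOn (hd z hz))
      fun z hz => (hIm z hz).symm
  · rintro ⟨hFi, hFD⟩
    exact injOn_and_convexHorizontalDirection_of_im_eq hFi
      (horizontallyOpenOn_of_nhds_le_map hD fun z hz => hF.nhds_le_map_of_injOn hD hFi hz) hFD
      hfc (fun z hz => let ⟨U, hU, _, hfU⟩ := hloc z hz; ⟨U, hU, hfU⟩) hIm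

/-- Clunie–Sheil-Small shear construction theorem. -/
theorem clunie_sheil_small
    (h g : ℂ → ℂ)
    (hh : DifferentiableOn ℂ h (Metric.ball (0 : ℂ) 1))
    (hg : DifferentiableOn ℂ g (Metric.ball (0 : ℂ) 1))
    (hg0 : g 0 = 0)
    (f : ℂ → ℂ)
    (hf : ∀ z, f z = h z + (starRingEnd ℂ) (g z))
    (hloc : ∀ z ∈ Metric.ball (0 : ℂ) 1, ∃ U ∈ nhds z,
      U ⊆ Metric.ball (0 : ℂ) 1 ∧ Set.InjOn f U) :
    (Set.InjOn f (Metric.ball (0 : ℂ) 1) ∧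
        ConvexHorizontalDirection (f '' Metric.ball (0 : ℂ) 1)) ↔
      (Set.InjOn (fun z => h z - g z) (Metric.ball (0 : ℂ) 1) ∧
        ConvexHorizontalDirection ((fun z => h z - g z) '' Metric.ball (0 : ℂ) 1)) :=
  clunie_sheil_small_general h g hh hg f hf hloc
end

section
/- Let φ be analytic and injective on the unit disk 𝔻 with φ(0) = 0 and φ(𝔻) convex in the horizontal direction, and let ω be analytic on 𝔻 with |ω(z)| < 1 for all z ∈ 𝔻. Suppose h and g are analytic on 𝔻 with h(0) = g(0) = 0 and with derivatives h'(z) = φ'(z)/(1 − ω(z)) and g'(z) = ω(z)·φ'(z)/(1 − ω(z)) for all z ∈ 𝔻. Then the harmonic shear f(z) = h(z) + conj(g(z)) is injective on 𝔻 and its image f(𝔻) is convex in the horizontal direction. -/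
/-!
Since `h - g = φ`, the shear `f = h + conj g` has `Im f = Im φ` and `Re f = Re (h + g)`, so
`f = T ∘ φ` where `T w = Re ((h + g) (φ⁻¹ w)) + i Im w` moves each point of `φ(𝔻)` along its
horizontal line. As `(h + g)' = (1 + ω) / (1 - ω) · φ'` and `φ' ≠ 0`, along each horizontal
section of `φ(𝔻)`, an interval, `T` has real derivative `Re ((1 + ω) / (1 - ω)) > 0`. Thus `T` is
strictly increasing and continuous on every section: it is injective, and it maps each section onto
an interval.
-/

open Complex Filter Function Metric Set Topology

theorem Complex.not_injOn_pow {n : ℕ} (hn : 2 ≤ n) {s : Set ℂ} (hs : s ∈ 𝓝 0) :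
    ¬ InjOn (· ^ n) s := by
  intro hinj
  obtain ⟨δ, hδ, hball⟩ := Metric.mem_nhds_iff.mp hs
  obtain ⟨ζ, hζ⟩ : ∃ ζ : ℂ, IsPrimitiveRoot ζ n := ⟨_, isPrimitiveRoot_exp n (by omega)⟩
  have ht : ((δ / 2 : ℝ) : ℂ) ∈ ball 0 δ := by
    rw [mem_ball_zero_iff, norm_real, Real.norm_of_nonneg (by positivity)]; linarith
  have hζt : ζ * (δ / 2 : ℝ) ∈ ball 0 δ := by
    rwa [mem_ball_zero_iff, norm_mul, hζ.norm'_eq_one (by omega), one_mul, ← mem_ball_zero_iff]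
  have heq : ζ * (δ / 2 : ℝ) = 1 * (δ / 2 : ℝ) :=
    (hinj (hball hζt) (hball ht) (by simp only [mul_pow, hζ.pow_eq_one, one_mul])).trans
      (one_mul _).symm
  exact hζ.ne_one (by omega) (mul_right_cancel₀ (by exact_mod_cast (half_pos hδ).ne') heq)

theorem AnalyticAt.exists_eventually_pow_eq {u : ℂ → ℂ} {z : ℂ} (hu : AnalyticAt ℂ u z)
    (hz : u z ≠ 0) {n : ℕ} (hn : n ≠ 0) :
    ∃ v : ℂ → ℂ, AnalyticAt ℂ v z ∧ ∀ᶠ w in 𝓝 z, v w ^ n = u w := by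
  obtain ⟨c, hc⟩ := IsAlgClosed.exists_pow_nat_eq (u z) (Nat.pos_of_ne_zero hn)
  have hq : AnalyticAt ℂ (fun w => u w / u z) z := hu.div analyticAt_const hz
  refine ⟨fun w => c * Complex.exp (Complex.log (u w / u z) / n), analyticAt_const.mul ?_, ?_⟩
  · exact ((hq.clog (by simp [hz])).div analyticAt_const (by exact_mod_cast hn)).cexp
  · filter_upwards [hu.continuousAt.eventually_ne hz] with w hw
    rw [mul_pow, ← exp_nat_mul, mul_div_cancel₀ _ (by exact_mod_cast hn),
      exp_log (div_ne_zero hw hz), hc, mul_div_cancel₀ _ hz]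

theorem AnalyticAt.exists_map_nhds_eq_pow {f : ℂ → ℂ} {z : ℂ} (hf : AnalyticAt ℂ f z) {n : ℕ}
    (hn : n ≠ 0) (hord : analyticOrderAt (f · - f z) z = n) :
    ∃ ψ : ℂ → ℂ, map ψ (𝓝 z) = 𝓝 0 ∧ ∀ᶠ w in 𝓝 z, f w - f z = ψ w ^ n := by
  obtain ⟨u, hu, huz, hfu⟩ := (hf.sub analyticAt_const).analyticOrderAt_eq_natCast.mp hord
  obtain ⟨v, hv, hvu⟩ := hu.exists_eventually_pow_eq huz hn
  have hvz : v z ≠ 0 := fun h0 => huz (by rw [← hvu.self_of_nhds, h0, zero_pow hn])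
  have hψ : HasStrictDerivAt (fun w => (w - z) * v w) (1 * v z + (z - z) * deriv v z) z :=
    HasStrictDerivAt.mul ((hasStrictDerivAt_id z).sub_const z) hv.hasStrictDerivAt
  rw [sub_self, zero_mul, add_zero, one_mul] at hψ
  refine ⟨fun w => (w - z) * v w, by simpa using hψ.map_nhds_eq hvz, ?_⟩
  filter_upwards [hfu, hvu] with w hfw hvw
  rw [mul_pow, hvw, ← smul_eq_mul, ← hfw, Pi.sub_apply]

theorem AnalyticAt.two_le_analyticOrderAt_sub {f : ℂ → ℂ} {z : ℂ} (hf : AnalyticAt ℂ f z)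
    (h0 : deriv f z = 0) : 2 ≤ analyticOrderAt (f · - f z) z := by
  rw [← hf.analyticOrderAt_deriv_add_one, ← one_add_one_eq_two]
  gcongr
  exact Order.one_le_iff_ne_zero.mpr (hf.deriv.analyticOrderAt_ne_zero.mpr h0)

/-- If `f' z = 0`, then `f - f z` vanishes to some order `n ≥ 2` and is thus the `n`-th power of
a local coordinate at `z`; but `w ↦ w ^ n` is not injective near `0`. -/
theorem deriv_ne_zero_of_injOn {f : ℂ → ℂ} {s : Set ℂ} (hs : IsOpen s)
    (hf : DifferentiableOn ℂ f s) (hinj : InjOn f s) {z : ℂ} (hz : z ∈ s) : deriv f z ≠ 0 := by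
  intro h0
  have hfa := hf.analyticAt (hs.mem_nhds hz)
  have hfin : analyticOrderAt (f · - f z) z ≠ ⊤ := by
    intro htop
    obtain ⟨w, ⟨hw, hws⟩, hwz⟩ := (((analyticOrderAt_eq_top.mp htop).and
      (hs.mem_nhds hz)).filter_mono nhdsWithin_le_nhds |>.and self_mem_nhdsWithin).exists
      (f := 𝓝[≠] z)
    exact hwz (hinj hws hz (sub_eq_zero.mp hw))
  obtain ⟨n, hn⟩ := ENat.ne_top_iff_exists.mp hfin
  have hn2 : 2 ≤ n := by exact_mod_cast hn ▸ hfa.two_le_analyticOrderAt_sub h0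
  obtain ⟨ψ, hψ, hfψ⟩ := hfa.exists_map_nhds_eq_pow (n := n) (by omega) hn.symm
  refine Complex.not_injOn_pow hn2 (hψ ▸ image_mem_map (hfψ.and (hs.mem_nhds hz))) ?_
  rintro _ ⟨a, ⟨ha, has⟩, rfl⟩ _ ⟨b, ⟨hb, hbs⟩, rfl⟩ hab
  rw [hinj has hbs (sub_left_inj.mp (ha.trans (hab.trans hb.symm)))]

theorem Complex.one_sub_ne_zero_of_norm_lt_one {a : ℂ} (ha : ‖a‖ < 1) : 1 - a ≠ 0 :=
  sub_ne_zero.mpr fun h => by simp [← h] at ha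

theorem Complex.re_one_add_div_one_sub_pos {a : ℂ} (ha : ‖a‖ < 1) :
    0 < ((1 + a) / (1 - a)).re := by
  have hsq : normSq a < 1 := by rw [← Complex.sq_norm]; nlinarith [norm_nonneg a]
  have hre : ((1 + a) / (1 - a)).re = (1 - normSq a) / normSq (1 - a) := by
    rw [div_re, ← add_div]
    simp only [normSq_apply, add_re, sub_re, one_re, add_im, sub_im, one_im]
    ring
  rw [hre]
  exact div_pos (by linarith) (normSq_pos.mpr (one_sub_ne_zero_of_norm_lt_one ha))

def mapRe (p : ℂ → ℝ) (w : ℂ) : ℂ := ⟨p w, w.im⟩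

@[simp]
theorem mapRe_re (p : ℂ → ℝ) (w : ℂ) : (mapRe p w).re = p w := rfl

@[simp]
theorem mapRe_im (p : ℂ → ℝ) (w : ℂ) : (mapRe p w).im = w.im := rfl

theorem Complex.ofReal_re_add_mul_I_of_im_eq {w : ℂ} {c : ℝ} (hw : w.im = c) :
    (w.re : ℂ) + c * I = w :=
  Complex.ext (by simp) (by simp [hw])

theorem injOn_mapRe {p : ℂ → ℝ} {Ω : Set ℂ}
    (hp : ∀ c : ℝ, StrictMonoOn (fun x : ℝ => p (x + c * I)) {x : ℝ | (x : ℂ) + c * I ∈ Ω}) :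
    InjOn (mapRe p) Ω := by
  intro w₁ hw₁ w₂ hw₂ heq
  have him : w₁.im = w₂.im := by simpa using congrArg im heq
  have h₁ := ofReal_re_add_mul_I_of_im_eq him
  have h₂ := ofReal_re_add_mul_I_of_im_eq (w := w₂) rfl
  have hre : w₁.re = w₂.re := (hp w₂.im).injOn (by simpa [h₁]) (by simpa [h₂])
    (by simpa [h₁, h₂] using congrArg re heq)
  exact Complex.ext hre him

theorem ConvexHorizontalDirection.image_mapRe {p : ℂ → ℝ} {Ω : Set ℂ}
    (hΩ : ConvexHorizontalDirection Ω)
    (hp : ∀ c : ℝ, ContinuousOn (fun x : ℝ => p (x + c * I)) {x : ℝ | (x : ℂ) + c * I ∈ Ω}) :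
    ConvexHorizontalDirection (mapRe p '' Ω) := by
  intro c
  have hsection : {x : ℝ | (x : ℂ) + c * I ∈ mapRe p '' Ω} =
      (fun x : ℝ => p (x + c * I)) '' {x : ℝ | (x : ℂ) + c * I ∈ Ω} := by
    ext x
    constructor
    · rintro ⟨w, hw, hwx⟩
      have hw' := ofReal_re_add_mul_I_of_im_eq (by simpa using congrArg im hwx)
      exact ⟨w.re, by simpa [hw'], by simpa [hw'] using congrArg re hwx⟩
    · rintro ⟨t, ht, rfl⟩
      exact ⟨_, ht, Complex.ext (by simp) (by simp)⟩
  rw [hsection]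
  exact ((hΩ c).isPreconnected.image _ (hp c)).ordConnected

theorem HasDerivAt.re_comp_ofReal_add {G : ℂ → ℂ} {G' : ℂ} {x c : ℝ}
    (hG : HasDerivAt G G' (x + c * I)) :
    HasDerivAt (fun t : ℝ => (G (t + c * I)).re) G'.re x :=
  (hG.comp_add_const (x : ℂ) (c * I)).real_of_complex

theorem continuousOn_re_comp_ofReal_add {Ω : Set ℂ} {G G' : ℂ → ℂ}
    (hG : ∀ w ∈ Ω, HasDerivAt G (G' w) w) (c : ℝ) :
    ContinuousOn (fun x : ℝ => (G (x + c * I)).re) {x : ℝ | (x : ℂ) + c * I ∈ Ω} :=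
  fun _ hx => (hG _ hx).re_comp_ofReal_add.continuousAt.continuousWithinAt

theorem strictMonoOn_re_comp_ofReal_add {Ω : Set ℂ} {G G' : ℂ → ℂ}
    (hΩ : ConvexHorizontalDirection Ω) (hG : ∀ w ∈ Ω, HasDerivAt G (G' w) w)
    (hpos : ∀ w ∈ Ω, 0 < (G' w).re) (c : ℝ) :
    StrictMonoOn (fun x : ℝ => (G (x + c * I)).re) {x : ℝ | (x : ℂ) + c * I ∈ Ω} :=
  have hsub := interior_subset (s := {x : ℝ | (x : ℂ) + c * I ∈ Ω})
  strictMonoOn_of_hasDerivWithinAt_pos (hΩ c).convex (continuousOn_re_comp_ofReal_add hG c)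
    (fun _ hx => (hG _ (hsub hx)).re_comp_ofReal_add.hasDerivWithinAt)
    (fun _ hx => hpos _ (hsub hx))

theorem hasDerivAt_comp_invFunOn {φ F q : ℂ → ℂ} {U : Set ℂ} (hU : IsOpen U)
    (hφd : DifferentiableOn ℂ φ U) (hφi : InjOn φ U)
    (hF : ∀ z ∈ U, HasDerivAt F (q z * deriv φ z) z) {z : ℂ} (hz : z ∈ U) :
    HasDerivAt (F ∘ invFunOn φ U) (q z) (φ z) := by
  have hφ' := deriv_ne_zero_of_injOn hU hφd hφi hz
  have hψ : HasDerivAt (invFunOn φ U) (deriv φ z)⁻¹ (φ z) :=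
    ((hφd.analyticAt (hU.mem_nhds hz)).hasStrictDerivAt.to_local_left_inverse hφ'
      (eventually_of_mem (hU.mem_nhds hz) fun _ hx => hφi.leftInvOn_invFunOn hx)).hasDerivAt
  have hFψ : HasDerivAt F (q z * deriv φ z) (invFunOn φ U (φ z)) := by
    rw [hφi.leftInvOn_invFunOn hz]; exact hF z hz
  simpa [mul_assoc, hφ'] using hFψ.comp (φ z) hψ

section Shear

variable {φ ω h g : ℂ → ℂ} {U : Set ℂ}

theorem eqOn_sub_of_shear (hU : IsOpen U) (hUc : IsPreconnected U)
    (hφd : DifferentiableOn ℂ φ U) (hω1 : ∀ z ∈ U, ‖ω z‖ < 1)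
    (hh' : ∀ z ∈ U, HasDerivAt h (deriv φ z / (1 - ω z)) z)
    (hg' : ∀ z ∈ U, HasDerivAt g (ω z * deriv φ z / (1 - ω z)) z) {z₀ : ℂ} (hz₀ : z₀ ∈ U)
    (h₀ : h z₀ - g z₀ = φ z₀) : EqOn (fun z => h z - g z) φ U := by
  have hderiv : ∀ z ∈ U, HasDerivAt (fun z => h z - g z) (deriv φ z) z := fun z hz =>
    ((hh' z hz).fun_sub (hg' z hz)).congr_deriv
      (by field_simp [one_sub_ne_zero_of_norm_lt_one (hω1 z hz)])
  exact hU.eqOn_of_deriv_eq hUc (fun z hz => (hderiv z hz).differentiableAt.differentiableWithinAt)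
    hφd (fun z hz => (hderiv z hz).deriv) hz₀ h₀

theorem hasDerivAt_add_of_shear (hh' : ∀ z ∈ U, HasDerivAt h (deriv φ z / (1 - ω z)) z)
    (hg' : ∀ z ∈ U, HasDerivAt g (ω z * deriv φ z / (1 - ω z)) z) {z : ℂ} (hz : z ∈ U) :
    HasDerivAt (fun z => h z + g z) ((1 + ω z) / (1 - ω z) * deriv φ z) z :=
  ((hh' z hz).fun_add (hg' z hz)).congr_deriv (by ring)

end Shear

theorem harmonic_shear_univalent_CHD_general
    (φ ω h g : ℂ → ℂ)
    (hφd : DifferentiableOn ℂ φ (Metric.ball (0 : ℂ) 1))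
    (hφi : Set.InjOn φ (Metric.ball (0 : ℂ) 1))
    (hφ0 : φ 0 = 0)
    (hφCHD : ConvexHorizontalDirection (φ '' Metric.ball (0 : ℂ) 1))
    (hω1 : ∀ z ∈ Metric.ball (0 : ℂ) 1, ‖ω z‖ < 1)
    (hh0 : h 0 = 0) (hg0 : g 0 = 0)
    (hh' : ∀ z ∈ Metric.ball (0 : ℂ) 1,
      HasDerivAt h (deriv φ z / (1 - ω z)) z)
    (hg' : ∀ z ∈ Metric.ball (0 : ℂ) 1,
      HasDerivAt g (ω z * deriv φ z / (1 - ω z)) z) :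
    Set.InjOn (fun z => h z + (starRingEnd ℂ) (g z)) (Metric.ball (0 : ℂ) 1) ∧
      ConvexHorizontalDirection
        ((fun z => h z + (starRingEnd ℂ) (g z)) '' Metric.ball (0 : ℂ) 1) := by
  set B := ball (0 : ℂ) 1
  set ψ := invFunOn φ B
  have hψ : LeftInvOn ψ φ B := hφi.leftInvOn_invFunOn
  have hsub : EqOn (fun z => h z - g z) φ B :=
    eqOn_sub_of_shear isOpen_ball (convex_ball 0 1).isPreconnected hφd hω1 hh' hg'
      (mem_ball_self one_pos) (by simp [hh0, hg0, hφ0])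
  set G := (fun z => h z + g z) ∘ ψ
  have hG : ∀ w ∈ φ '' B, HasDerivAt G ((1 + ω (ψ w)) / (1 - ω (ψ w))) w := by
    rintro _ ⟨z, hz, rfl⟩
    rw [hψ hz]
    exact hasDerivAt_comp_invFunOn isOpen_ball hφd hφi
      (fun _ hz => hasDerivAt_add_of_shear hh' hg' hz) hz
  have hpos : ∀ w ∈ φ '' B, 0 < ((1 + ω (ψ w)) / (1 - ω (ψ w))).re := by
    rintro _ ⟨z, hz, rfl⟩
    rw [hψ hz]
    exact re_one_add_div_one_sub_pos (hω1 z hz)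
  have hf : EqOn (fun z => h z + (starRingEnd ℂ) (g z)) (mapRe (fun w => (G w).re) ∘ φ) B := by
    intro z hz
    apply Complex.ext
    · simp [G, hψ hz]
    · simp [← hsub hz, sub_eq_add_neg]
  have hT := injOn_mapRe (p := fun w => (G w).re) (strictMonoOn_re_comp_ofReal_add hφCHD hG hpos)
  refine ⟨(hT.comp hφi (mapsTo_image φ B)).congr hf.symm, ?_⟩
  rw [hf.image_eq, image_comp]
  exact hφCHD.image_mapRe (continuousOn_re_comp_ofReal_add hG)

/-- The harmonic shear `f = h + conj g` of a CHD conformal mapping `φ` with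
analytic dilatation `ω`, `|ω| < 1`, is univalent with CHD range. -/
theorem harmonic_shear_univalent_CHD
    (φ ω h g : ℂ → ℂ)
    (hφd : DifferentiableOn ℂ φ (Metric.ball (0 : ℂ) 1))
    (hφi : Set.InjOn φ (Metric.ball (0 : ℂ) 1))
    (hφ0 : φ 0 = 0)
    (hφCHD : ConvexHorizontalDirection (φ '' Metric.ball (0 : ℂ) 1))
    (hωd : DifferentiableOn ℂ ω (Metric.ball (0 : ℂ) 1))
    (hω1 : ∀ z ∈ Metric.ball (0 : ℂ) 1, ‖ω z‖ < 1)
    (hhd : DifferentiableOn ℂ h (Metric.ball (0 : ℂ) 1))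
    (hgd : DifferentiableOn ℂ g (Metric.ball (0 : ℂ) 1))
    (hh0 : h 0 = 0) (hg0 : g 0 = 0)
    (hh' : ∀ z ∈ Metric.ball (0 : ℂ) 1,
      HasDerivAt h (deriv φ z / (1 - ω z)) z)
    (hg' : ∀ z ∈ Metric.ball (0 : ℂ) 1,
      HasDerivAt g (ω z * deriv φ z / (1 - ω z)) z) :
    Set.InjOn (fun z => h z + (starRingEnd ℂ) (g z)) (Metric.ball (0 : ℂ) 1) ∧
      ConvexHorizontalDirection
        ((fun z => h z + (starRingEnd ℂ) (g z)) '' Metric.ball (0 : ℂ) 1) :=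
  harmonic_shear_univalent_CHD_general φ ω h g hφd hφi hφ0 hφCHD hω1 hh0 hg0 hh' hg'
end

section
/- Let a, b, c ∈ ℂ with Re c > Re b > 0, and let z ∈ ℂ with |z| < 1. Then the Gaussian hypergeometric series equals the Euler integral: ∑_{k=0}^∞ ((a)_k (b)_k)/((c)_k · k!) · z^k = (Γ(c)/(Γ(b)·Γ(c−b))) · ∫₀¹ t^{b−1} (1−t)^{c−b−1} (1−zt)^{−a} dt, where the powers t^{b−1}, (1−t)^{c−b−1}, (1−zt)^{−a} are principal-branch complex powers and Γ is the complex Gamma function. -/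
/-!
Expand `(1 - z t) ^ (-a)` in its binomial series `∑ (a)_k / k! (z t) ^ k`. Since `|z| < 1`, the
coefficients `(a)_k / k! z ^ k` are absolutely summable, so the series may be integrated termwise
against the beta weight `t ^ (b - 1) (1 - t) ^ (c - b - 1)`, whose `k`-th moment is
`B(b + k, c - b) = Γ(b + k) Γ(c - b) / Γ(c + k)`. With `Γ(s + k) = (s)_k Γ(s)` the normalised
moment `Γ(c) / (Γ(b) Γ(c - b)) B(b + k, c - b)` is `(b)_k / (c)_k`.
-/

open Complex MeasureTheory

theorem Ring.choose_add_nat_sub_one_eq_ascPochhammer_div {K : Type*} [Field K] [CharZero K]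
    (a : K) (n : ℕ) :
    Ring.choose (a + n - 1) n = (ascPochhammer K n).eval a / n.factorial := by
  rw [← Ring.multichoose_eq, eq_div_iff (by simp [Nat.factorial_ne_zero]), mul_comm,
    ← nsmul_eq_mul, Ring.factorial_nsmul_multichoose_eq_ascPochhammer,
    Polynomial.ascPochhammer_smeval_eq_eval]

namespace Complex

lemma hasFPowerSeriesOnBall_one_sub_cpow_neg (a : ℂ) :
    HasFPowerSeriesOnBall (fun w ↦ (1 - w) ^ (-a))
      (.ofScalars ℂ fun n ↦ (ascPochhammer ℂ n).eval a / n.factorial) 0 1 := by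
  simpa [cpow_neg, Ring.choose_add_nat_sub_one_eq_ascPochhammer_div] using
    one_div_one_sub_cpow_hasFPowerSeriesOnBall_zero a

lemma hasSum_ascPochhammer_div_factorial_mul_pow (a : ℂ) {w : ℂ} (hw : ‖w‖ < 1) :
    HasSum (fun n ↦ (ascPochhammer ℂ n).eval a / n.factorial * w ^ n) ((1 - w) ^ (-a)) := by
  simpa [FormalMultilinearSeries.ofScalars_apply_eq, mul_comm] using
    (hasFPowerSeriesOnBall_one_sub_cpow_neg a).hasSum (y := w)
      (by simpa [← ofReal_norm] using hw)

lemma summable_norm_ascPochhammer_div_factorial_mul_pow (a : ℂ) {w : ℂ} (hw : ‖w‖ < 1) :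
    Summable fun n ↦ ‖(ascPochhammer ℂ n).eval a / n.factorial * w ^ n‖ := by
  simpa [FormalMultilinearSeries.ofScalars_apply_eq, mul_comm] using
    FormalMultilinearSeries.summable_norm_apply _ (x := w) <| Metric.eball_subset_eball
      (hasFPowerSeriesOnBall_one_sub_cpow_neg a).r_le (by simpa [← ofReal_norm] using hw)

lemma ne_neg_natCast_of_re_pos {s : ℂ} (hs : 0 < s.re) (k : ℕ) : s ≠ -k := by
  rintro rfl
  simp only [neg_re, natCast_re, Left.neg_pos_iff] at hs
  linarith [k.cast_nonneg (α := ℝ)]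

lemma Gamma_add_nat_of_re_pos {s : ℂ} (hs : 0 < s.re) (k : ℕ) :
    Gamma (s + k) = (ascPochhammer ℂ k).eval s * Gamma s := by
  rw [← Gamma_add_nat_div_Gamma_eq s (ne_neg_natCast_of_re_pos hs),
    div_mul_cancel₀ _ (Gamma_ne_zero_of_re_pos hs)]

lemma betaIntegral_add_nat (u v : ℂ) (k : ℕ) :
    betaIntegral (u + k) v =
      ∫ x in (0 : ℝ)..1, (x : ℂ) ^ k * ((x : ℂ) ^ (u - 1) * (1 - (x : ℂ)) ^ (v - 1)) := by
  refine intervalIntegral.integral_congr_ae (.of_forall fun x hx ↦ ?_)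
  rw [Set.uIoc_of_le zero_le_one] at hx
  have hx0 : (x : ℂ) ≠ 0 := ofReal_ne_zero.2 hx.1.ne'
  rw [← mul_assoc, ← cpow_natCast, ← cpow_add _ _ hx0]
  ring_nf

lemma Gamma_div_mul_betaIntegral_add_nat {u v : ℂ} (hu : 0 < u.re) (hv : 0 < v.re) (k : ℕ) :
    Gamma (u + v) / (Gamma u * Gamma v) * betaIntegral (u + k) v =
      (ascPochhammer ℂ k).eval u / (ascPochhammer ℂ k).eval (u + v) := by
  have huv : 0 < (u + v).re := by simp only [add_re]; linarith
  have huk : 0 < (u + k).re := by simp only [add_re, natCast_re]; positivity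
  have hβ := Gamma_mul_Gamma_eq_betaIntegral huk hv
  rw [add_right_comm, Gamma_add_nat_of_re_pos hu, Gamma_add_nat_of_re_pos huv] at hβ
  have hpoch : (ascPochhammer ℂ k).eval (u + v) ≠ 0 := by
    rw [ne_eq, ascPochhammer_eval_eq_zero_iff]
    rintro ⟨j, -, hj⟩
    exact ne_neg_natCast_of_re_pos huv j (neg_eq_iff_eq_neg.1 hj.symm)
  field_simp [Gamma_ne_zero_of_re_pos hu, Gamma_ne_zero_of_re_pos hv]
  linear_combination hβ.symm

end Complex

lemma hasSum_integral_tsum_mul_pow_mul {α : Type*} [MeasurableSpace α] {μ : Measure α}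
    {φ g : α → ℂ} {c : ℕ → ℂ} (hφm : AEStronglyMeasurable φ μ) (hφ : ∀ᵐ x ∂μ, ‖φ x‖ ≤ 1)
    (hg : Integrable g μ) (hc : Summable fun k ↦ ‖c k‖) :
    HasSum (fun k ↦ c k * ∫ x, φ x ^ k * g x ∂μ) (∫ x, (∑' k, c k * φ x ^ k) * g x ∂μ) := by
  have hbound (k : ℕ) : ∀ᵐ x ∂μ, ‖φ x ^ k * g x‖ ≤ ‖g x‖ := by
    filter_upwards [hφ] with x hx
    rw [norm_mul, norm_pow]
    exact mul_le_of_le_one_left (norm_nonneg _) (pow_le_one₀ (norm_nonneg _) hx)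
  have hint (k : ℕ) : Integrable (fun x ↦ φ x ^ k * g x) μ :=
    hg.norm.mono' ((hφm.pow k).mul hg.1) (hbound k)
  have hsum : Summable fun k ↦ ∫ x, ‖c k * (φ x ^ k * g x)‖ ∂μ := by
    refine .of_nonneg_of_le (fun k ↦ integral_nonneg fun x ↦ norm_nonneg _) (fun k ↦ ?_)
      (hc.mul_right (∫ x, ‖g x‖ ∂μ))
    simp_rw [norm_mul _ (_ * _)]
    rw [integral_const_mul]
    exact mul_le_mul_of_nonneg_left (integral_mono_ae (hint k).norm hg.norm (hbound k))
      (norm_nonneg _)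
  have h := hasSum_integral_of_summable_integral_norm (fun k ↦ (hint k).const_mul (c k)) hsum
  simp only [integral_const_mul] at h
  simpa only [← mul_assoc, tsum_mul_right] using h

/-- Euler integral representation of the Gaussian hypergeometric function:
for `Re c > Re b > 0` and `|z| < 1`,
`∑ (a)_k (b)_k / ((c)_k k!) z^k = Γ(c)/(Γ(b)Γ(c-b)) ∫₀¹ t^(b-1)(1-t)^(c-b-1)(1-zt)^(-a) dt`. -/
theorem hypergeometric_euler_integral
    (a b c : ℂ) (hb : 0 < b.re) (hcb : b.re < c.re)
    (z : ℂ) (hz : ‖z‖ < 1) :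
    ∑' k : ℕ,
        (Polynomial.eval a (ascPochhammer ℂ k) * Polynomial.eval b (ascPochhammer ℂ k)) /
          (Polynomial.eval c (ascPochhammer ℂ k) * (Nat.factorial k : ℂ)) * z ^ k =
      Complex.Gamma c / (Complex.Gamma b * Complex.Gamma (c - b)) *
        ∫ t in (0:ℝ)..1,
          (t : ℂ) ^ (b - 1) * ((1 : ℂ) - (t : ℂ)) ^ (c - b - 1) *
            ((1 : ℂ) - z * (t : ℂ)) ^ (-a) := by
  have hcb' : 0 < (c - b).re := by simp only [sub_re]; linarith
  have htermwise := hasSum_integral_tsum_mul_pow_mul (μ := volume.restrict (Set.Ioc 0 1))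
    (φ := ((↑) : ℝ → ℂ)) (c := fun k ↦ (ascPochhammer ℂ k).eval a / k.factorial * z ^ k)
    continuous_ofReal.aestronglyMeasurable
    ((ae_restrict_iff' measurableSet_Ioc).2 (.of_forall fun t ht ↦ by
      simpa [abs_of_pos ht.1] using ht.2))
    (betaIntegral_convergent hb hcb').1 (summable_norm_ascPochhammer_div_factorial_mul_pow a hz)
  simp only [← intervalIntegral.integral_of_le zero_le_one, ← betaIntegral_add_nat] at htermwise
  have hbinomial : ∫ t in (0 : ℝ)..1,
      (∑' k, (ascPochhammer ℂ k).eval a / k.factorial * z ^ k * (t : ℂ) ^ k) *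
        ((t : ℂ) ^ (b - 1) * (1 - (t : ℂ)) ^ (c - b - 1)) =
      ∫ t in (0 : ℝ)..1, (t : ℂ) ^ (b - 1) * (1 - (t : ℂ)) ^ (c - b - 1) * (1 - z * t) ^ (-a) :=
    intervalIntegral.integral_congr_ae (.of_forall fun t ht ↦ by
      rw [Set.uIoc_of_le zero_le_one] at ht
      have hzt : ‖z * t‖ < 1 := by
        simpa [abs_of_pos ht.1] using mul_lt_one_of_nonneg_of_lt_one_left (norm_nonneg z) hz ht.2
      rw [mul_comm, ← (hasSum_ascPochhammer_div_factorial_mul_pow a hzt).tsum_eq]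
      exact congrArg _ (tsum_congr fun k ↦ by ring))
  have hratio (k : ℕ) : Gamma c / (Gamma b * Gamma (c - b)) * betaIntegral (b + k) (c - b) =
      (ascPochhammer ℂ k).eval b / (ascPochhammer ℂ k).eval c := by
    simpa using Gamma_div_mul_betaIntegral_add_nat hb hcb' k
  rw [hbinomial] at htermwise
  calc _ = ∑' k, Gamma c / (Gamma b * Gamma (c - b)) *
        ((ascPochhammer ℂ k).eval a / k.factorial * z ^ k * betaIntegral (b + k) (c - b)) :=
        tsum_congr fun k ↦ by rw [mul_left_comm, hratio]; ring
    _ = _ := (htermwise.mul_left _).tsum_eq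
end

section
/- Let n ≥ 1 be a natural number and z ∈ ℂ with |z| < 1. Then ∫₀¹ z·(zt)^n·(1 − (zt)^n)^{−(n+2)/n} dt = (1/(n+1)) · ∑_{k=0}^∞ ((1+2/n)_k (1+1/n)_k)/((2+1/n)_k · k!) · z^{nk+n+1}, where (1 − (zt)^n)^{−(n+2)/n} is the principal-branch complex power. In other words, the co-analytic part of the harmonic shear of the polygonal mapping φ(z) = ∫₀^z (1−ζ^n)^{−2/n} dζ with dilatation ω(z) = z^n is g(z) = (z^{n+1}/(n+1))·F(1+2/n, 1+1/n; 2+1/n; z^n). -/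
/-!
Expand `(1 - w)^(-a) = ∑ (a)_k / k! · w^k` (the binomial series, `‖w‖ < 1`) at `w = (z t)^n` and
integrate `z (z t)^m (1 - (z t)^n)^(-a)` term by term; dominated convergence applies because for
`t ∈ [0, 1]` the `k`-th term is bounded by `‖(a)_k / k!‖ · ‖z^n‖^k`, a convergent series. Each term
integrates to `(a)_k / k! · z^(n k + m + 1) / (n k + m + 1)`, and for `m = n` the identity
`b (b + 1)_k = (b)_k (b + k)` with `b = 1 + 1/n` turns `1 / (n k + n + 1)` into
`(1 / (n + 1)) · (1 + 1/n)_k / (2 + 1/n)_k`.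
-/

open Polynomial MeasureTheory
open scoped Interval

lemma Ring.choose_add_sub_one_eq_ascPochhammer_div_factorial {K : Type*} [Field K] [CharZero K]
    (a : K) (k : ℕ) :
    Ring.choose (a + k - 1) k = (ascPochhammer K k).eval a / k.factorial := by
  rw [← Ring.multichoose_eq, eq_div_iff (mod_cast k.factorial_ne_zero), mul_comm, ← nsmul_eq_mul,
    Ring.factorial_nsmul_multichoose_eq_ascPochhammer, ascPochhammer_smeval_cast,
    ascPochhammer_smeval_eq_eval]

theorem Complex.hasSum_ascPochhammer_div_factorial_mul_pow_s6 (a : ℂ) {w : ℂ} (hw : ‖w‖ < 1) :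
    HasSum (fun k => (ascPochhammer ℂ k).eval a / k.factorial * w ^ k) ((1 - w) ^ (-a)) := by
  have h := (one_div_one_sub_cpow_hasFPowerSeriesOnBall_zero a).hasSum
    (y := w) (by simpa [← ofReal_norm, ENNReal.ofReal_lt_one] using hw)
  simpa [FormalMultilinearSeries.ofScalars_apply_eq,
    Ring.choose_add_sub_one_eq_ascPochhammer_div_factorial, cpow_neg, mul_comm] using h

theorem hasSum_integral_mul_pow_mul_one_sub_pow_cpow (a : ℂ) (m : ℕ) {n : ℕ} (hn : n ≠ 0)
    {z : ℂ} (hz : ‖z‖ < 1) :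
    HasSum (fun k => (ascPochhammer ℂ k).eval a / k.factorial * z ^ (n * k + m + 1) /
        (n * k + m + 1 : ℕ))
      (∫ t in (0 : ℝ)..1, z * (z * t) ^ m * (1 - (z * t) ^ n) ^ (-a)) := by
  set c : ℕ → ℂ := fun k => (ascPochhammer ℂ k).eval a / k.factorial
  have hzt : ∀ t ∈ Ι (0 : ℝ) 1, ‖z * t‖ ≤ ‖z‖ := by
    rintro t ⟨ht0, ht1⟩
    rw [norm_mul, Complex.norm_real, Real.norm_of_nonneg (by simpa using ht0.le)]
    exact mul_le_of_le_one_right (norm_nonneg z) (by simpa using ht1)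
  have hbound_summable : Summable fun k => ‖c k‖ * ‖z ^ n‖ ^ k := by
    have hzn : ‖z ^ n‖ < 1 := by rw [norm_pow]; exact pow_lt_one₀ (norm_nonneg _) hz hn
    simpa [c, norm_mul, norm_pow] using
      (Complex.hasSum_ascPochhammer_div_factorial_mul_pow_s6 a hzn).summable.norm
  have hF := intervalIntegral.hasSum_integral_of_dominated_convergence (μ := volume) (a := 0)
    (b := 1) (F := fun k (t : ℝ) => z * (z * t) ^ m * (c k * ((z * t) ^ n) ^ k))
    (f := fun t : ℝ => z * (z * t) ^ m * (1 - (z * t) ^ n) ^ (-a))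
    (fun k _ => ‖c k‖ * ‖z ^ n‖ ^ k) (fun k => by fun_prop)
    (fun k => ae_of_all _ fun t ht => ?bound) (ae_of_all _ fun _ _ => hbound_summable)
    intervalIntegrable_const (ae_of_all _ fun t ht => ?series)
  case bound =>
    have hz1 : ‖z * t‖ ≤ 1 := (hzt t ht).trans hz.le
    rw [norm_mul, norm_mul, norm_mul, norm_pow, norm_pow, norm_pow, norm_pow]
    calc ‖z‖ * ‖z * t‖ ^ m * (‖c k‖ * (‖z * t‖ ^ n) ^ k)
        ≤ 1 * 1 * (‖c k‖ * (‖z‖ ^ n) ^ k) := by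
          gcongr
          exacts [pow_le_one₀ (norm_nonneg _) hz1, hzt t ht]
      _ = ‖c k‖ * (‖z‖ ^ n) ^ k := by ring
  case series =>
    have hw : ‖(z * t) ^ n‖ < 1 := by
      rw [norm_pow]; exact pow_lt_one₀ (norm_nonneg _) ((hzt t ht).trans_lt hz) hn
    exact (Complex.hasSum_ascPochhammer_div_factorial_mul_pow_s6 a hw).mul_left (z * (z * t) ^ m)
  refine hF.congr_fun fun k => ?_
  have hmonomial : (fun t : ℝ => z * (z * t) ^ m * (c k * ((z * t) ^ n) ^ k)) =
      fun t : ℝ => c k * z ^ (n * k + m + 1) * ((t ^ (n * k + m) : ℝ) : ℂ) := by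
    ext t; push_cast; ring
  rw [hmonomial, intervalIntegral.integral_const_mul, intervalIntegral.integral_ofReal,
    integral_pow]
  push_cast
  ring

lemma inv_add_natCast_eq_ascPochhammer_div {b : ℂ} (hb : 0 < b.re) (k : ℕ) :
    (b + k)⁻¹ = b⁻¹ * (ascPochhammer ℂ k).eval b / (ascPochhammer ℂ k).eval (b + 1) := by
  have hshift : b * (ascPochhammer ℂ k).eval (b + 1) = (ascPochhammer ℂ k).eval b * (b + k) := by
    rw [← ascPochhammer_succ_eval, ascPochhammer_succ_left]
    simp [eval_comp]
  have hb0 : b ≠ 0 := fun h => by simp [h] at hb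
  have hbk : b + k ≠ 0 := fun h => by
    have := congrArg Complex.re h
    simp only [Complex.add_re, Complex.natCast_re, Complex.zero_re] at this
    linarith [k.cast_nonneg (α := ℝ)]
  have hpoch : (ascPochhammer ℂ k).eval (b + 1) ≠ 0 := by
    rw [Ne, ascPochhammer_eval_eq_zero_iff]
    rintro ⟨j, -, hj⟩
    have := congrArg Complex.re hj
    simp only [Complex.natCast_re, neg_add_rev, Complex.add_re, Complex.neg_re,
      Complex.one_re] at this
    linarith [j.cast_nonneg (α := ℝ)]
  field_simp
  linear_combination hshift

/-- The co-analytic part of the harmonic shear of the regular `n`-gon mapping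
`φ(z) = ∫₀^z (1-ζ^n)^(-2/n) dζ` with dilatation `ω(z) = z^n` is
`g(z) = (z^(n+1)/(n+1))·F(1+2/n, 1+1/n; 2+1/n; z^n)`. -/
theorem polygon_shear_coanalytic_part
    (n : ℕ) (hn : 1 ≤ n) (z : ℂ) (hz : ‖z‖ < 1) :
    (∫ t in (0:ℝ)..1,
        z * (z * (t : ℂ)) ^ n *
          ((1 : ℂ) - (z * (t : ℂ)) ^ n) ^ (-(((n : ℂ) + 2) / (n : ℂ)))) =
      (1 / ((n : ℂ) + 1)) *
        ∑' k : ℕ,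
          (Polynomial.eval (1 + 2 / (n : ℂ)) (ascPochhammer ℂ k) *
              Polynomial.eval (1 + 1 / (n : ℂ)) (ascPochhammer ℂ k)) /
            (Polynomial.eval (2 + 1 / (n : ℂ)) (ascPochhammer ℂ k) *
              (Nat.factorial k : ℂ)) * z ^ (n * k + n + 1) := by
  have hn0 : (n : ℂ) ≠ 0 := Nat.cast_ne_zero.mpr (by omega)
  have hexp : -(((n : ℂ) + 2) / n) = -(1 + 2 / n) := by field_simp
  rw [hexp, ← (hasSum_integral_mul_pow_mul_one_sub_pow_cpow _ n (by omega) hz).tsum_eq,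
    ← tsum_mul_left]
  refine tsum_congr fun k => ?_
  have hb : 0 < (1 + 1 / (n : ℂ)).re := by norm_num; positivity
  have hN : ((n * k + n + 1 : ℕ) : ℂ) = n * (1 + 1 / n + k) := by push_cast; field_simp; ring
  rw [div_eq_mul_inv _ ((n * k + n + 1 : ℕ) : ℂ), hN, mul_inv,
    inv_add_natCast_eq_ascPochhammer_div hb, show (1 : ℂ) + 1 / n + 1 = 2 + 1 / n by ring]
  field_simp
end
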